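/- arXiv:math/9911219 — 11 statements merged into one kernel-verified Lean document; each statement's English description precedes it below -/
import Mathlib

section
/- Let (A,·) be a commutative associative algebra over ℂ, d a derivation of A, and ξ ∈ A. Then the operation u∘v = u·d(v) + ξ·u·v makes A a Novikov algebra. -/
/-- If A is a commutative associative algebra over ℂ, d a derivation and ξ ∈ A,
then u∘v = u·d(v) + ξ·u·v makes A a Novikov algebra. -/
theorem stmt_3 (A : Type*) [CommRing A] [Algebra ℂ A]
    (d : A →ₗ[ℂ] A) (hd : ∀ u v : A, d (u * v) = d u * v + u * d v) (ξ : A)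
    (circ : A → A → A) (hcirc : ∀ u v : A, circ u v = u * d v + ξ * u * v) :
    (∀ u v w : A, circ (circ u v) w = circ (circ u w) v) ∧
    (∀ u v w : A,
      circ (circ u v) w - circ u (circ v w) =
      circ (circ v u) w - circ v (circ u w)) := by
  constructor <;> intro u v w <;>
    simp only [hcirc, map_add, hd] <;> ring
end

section
/- Let Δ be an additive subgroup of ℂ, b ∈ ℂ, and let A be the vector space with basis {x_α : α ∈ Δ}. Then the operation x_α ∘ x_β = (β+b) x_{α+β} (extended bilinearly) makes A a Novikov algebra. -/
/-!
Realise `A` as the group algebra `ℂ[Δ]`, on which `∂ x_β = β x_β` is a derivation; then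
`u ∘ v = u (∂v + b v)`. For any commutative algebra with a derivation this product is Novikov
(Gelfand's construction): `(u ∘ v) ∘ w = u (∂v + b v)(∂w + b w)` is symmetric in `v, w`, and by
the Leibniz rule the associator of `u, v, w` is `-u v (∂²w + b ∂w)`, symmetric in `u, v`.
-/

structure IsNovikov {R M : Type*} [CommSemiring R] [AddCommGroup M] [Module R M]
    (μ : M →ₗ[R] M →ₗ[R] M) : Prop where
  right_comm : ∀ u v w, μ (μ u v) w = μ (μ u w) v
  associator_symm : ∀ u v w, μ (μ u v) w - μ u (μ v w) = μ (μ v u) w - μ v (μ u w)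

namespace IsNovikov

variable {R M N : Type*} [CommSemiring R] [AddCommGroup M] [Module R M] [AddCommGroup N]
  [Module R N]

theorem arrowCongr {μ : M →ₗ[R] M →ₗ[R] M} (h : IsNovikov μ) (e : M ≃ₗ[R] N) :
    IsNovikov (e.arrowCongr (e.arrowCongr e) μ) where
  right_comm u v w := by simp [h.right_comm]
  associator_symm u v w := by simp [← map_sub, h.associator_symm]

end IsNovikov

namespace Derivation

variable {R A : Type*} [CommRing R] [CommRing A] [Algebra R A]

def novikovMul (D : Derivation R A A) (b : R) : A →ₗ[R] A →ₗ[R] A :=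
  (LinearMap.mul R A).compl₂ (D.toLinearMap + b • LinearMap.id)

@[simp]
theorem novikovMul_apply (D : Derivation R A A) (b : R) (u v : A) :
    D.novikovMul b u v = u * (D v + b • v) := rfl

theorem isNovikov_novikovMul (D : Derivation R A A) (b : R) : IsNovikov (D.novikovMul b) where
  right_comm u v w := by simp only [novikovMul_apply]; ring
  associator_symm u v w := by
    simp only [novikovMul_apply, leibniz, smul_eq_mul, Algebra.smul_def]
    ring

end Derivation

namespace AddMonoidAlgebra

variable {R G : Type*} [AddCommMonoid G]

section CommSemiring

variable [CommSemiring R]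

noncomputable def weightLinearMap (φ : G →+ R) : R[G] →ₗ[R] R[G] :=
  Finsupp.lsum R (fun g => φ g • lsingle g) ∘ₗ (coeffLinearEquiv R).toLinearMap

@[simp]
theorem weightLinearMap_single (φ : G →+ R) (g : G) (r : R) :
    weightLinearMap φ (single g r) = single g (φ g * r) := by
  simp [weightLinearMap, smul_single]

noncomputable def weightDerivation (φ : G →+ R) : Derivation R R[G] R[G] where
  toLinearMap := weightLinearMap φ
  map_one_eq_zero' := by simp [one_def]
  leibniz' a b := by
    induction a using induction_linear with
    | zero => simp
    | add a₁ a₂ h₁ h₂ =>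
      simp only [add_mul, map_add, h₁, h₂, smul_eq_mul, mul_add]
      abel
    | single g r =>
      induction b using induction_linear with
      | zero => simp
      | add b₁ b₂ h₁ h₂ =>
        simp only [mul_add, map_add, h₁, h₂, smul_eq_mul, add_mul]
        abel
      | single h s =>
        simp only [single_mul_single, weightLinearMap_single, smul_eq_mul, map_add, add_comm h g,
          ← single_add]
        congr 1
        ring

@[simp]
theorem weightDerivation_single (φ : G →+ R) (g : G) (r : R) :
    weightDerivation φ (single g r) = single g (φ g * r) :=
  weightLinearMap_single φ g r

end CommSemiring

theorem novikovMul_weightDerivation_single [CommRing R] (φ : G →+ R) (b : R) (g h : G)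
    (r s : R) :
    (weightDerivation φ).novikovMul b (single g r) (single h s) =
      single (g + h) (r * s * (φ h + b)) := by
  simp only [Derivation.novikovMul_apply, weightDerivation_single, smul_single, smul_eq_mul,
    ← single_add, single_mul_single]
  congr 1
  ring

end AddMonoidAlgebra

open Finsupp

/-- On the free ℂ-vector space with basis {x_α : α ∈ Δ}, the bilinear operation
x_α ∘ x_β = (β+b) x_{α+β} is a Novikov product. -/
theorem stmt_4 (Δ : AddSubgroup ℂ) (b : ℂ) :
    ∃ circ : (Δ →₀ ℂ) →ₗ[ℂ] (Δ →₀ ℂ) →ₗ[ℂ] (Δ →₀ ℂ),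
      (∀ α β : Δ, circ (single α 1) (single β 1) =
        ((β : ℂ) + b) • single (α + β) 1) ∧
      (∀ u v w, circ (circ u v) w = circ (circ u w) v) ∧
      (∀ u v w,
        circ (circ u v) w - circ u (circ v w) =
        circ (circ v u) w - circ v (circ u w)) := by
  let e := AddMonoidAlgebra.coeffLinearEquiv (M := Δ) ℂ (S := ℂ)
  have hN := ((AddMonoidAlgebra.weightDerivation Δ.subtype).isNovikov_novikovMul b).arrowCongr e
  refine ⟨_, fun α β => ?_, hN.right_comm, hN.associator_symm⟩
  simp only [LinearEquiv.arrowCongr_apply, e, AddMonoidAlgebra.coeffLinearEquiv_symm_apply,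
    AddMonoidAlgebra.ofCoeff_single, AddMonoidAlgebra.novikovMul_weightDerivation_single,
    AddMonoidAlgebra.coeffLinearEquiv_apply, AddMonoidAlgebra.coeff_single, smul_single,
    one_mul, mul_one, smul_eq_mul, AddSubgroup.coe_subtype]
end

section
/- Let Δ be an additive subgroup of ℂ and let A be the vector space with basis {x_{α,i} : α ∈ Δ, i ∈ ℕ}. Then the bracket [x_{α,i}, x_{β,j}] = (β−α) x_{α+β,i+j} + (j−i) x_{α+β,i+j−1} (with x_{α,−1}=0, extended bilinearly) defines a Lie algebra structure on A. -/
/-!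
Identify `x_{α,i}` with the exponential polynomial `x^i e^{αx}`, i.e. with the basis element
`(α, i)` of the commutative algebra `ℂ[Δ × ℕ]`, on which `D = d/dx` acts by
`D (x^i e^{αx}) = α x^i e^{αx} + i x^{i-1} e^{αx}`, and the bracket of the theorem is
`[f, g] = f D g - g D f`, i.e. the bracket of the vector fields `f D` and `g D`.
For any derivation `D` of a commutative algebra this bracket is alternating, and the Jacobi
identity is a short computation with the Leibniz rule.
-/

open Finsupp

namespace Derivation

variable {R A : Type*} [CommSemiring R] [CommRing A] [Algebra R A] (D : Derivation R A A)

def wittBracket : A →ₗ[R] A →ₗ[R] A :=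
  (LinearMap.mul R A).compl₂ D.toLinearMap - ((LinearMap.mul R A).compl₂ D.toLinearMap).flip

lemma wittBracket_apply (f g : A) : D.wittBracket f g = f * D g - g * D f := rfl

lemma wittBracket_self (f : A) : D.wittBracket f f = 0 := sub_self _

lemma wittBracket_jacobi (f g h : A) :
    D.wittBracket (D.wittBracket f g) h + D.wittBracket (D.wittBracket g h) f +
      D.wittBracket (D.wittBracket h f) g = 0 := by
  simp only [wittBracket_apply]
  simp only [map_sub, leibniz, smul_eq_mul]
  ring

end Derivation

namespace AddMonoidAlgebra

section DerivationOfSingle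

variable {R G : Type*} [CommRing R]

lemma constr_basis_single (d : G → R[G]) (g : G) :
    (basis G R).constr R d (single g 1) = d g :=
  (basis G R).constr_basis R d g

variable [AddCommMonoid G]

noncomputable def derivationOfSingle (d : G → R[G])
    (hd : ∀ g h, d (g + h) = single g 1 * d h + single h 1 * d g) :
    Derivation R R[G] R[G] :=
  Derivation.mk' ((basis G R).constr R d) fun x y => LinearMap.congr_fun₂
    (LinearMap.ext_basis (B := (LinearMap.mul R R[G]).compr₂ ((basis G R).constr R d))
      (B' := (LinearMap.mul R R[G]).compl₂ ((basis G R).constr R d) +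
        ((LinearMap.mul R R[G]).compl₂ ((basis G R).constr R d)).flip) (basis G R) (basis G R)
      (by simpa [constr_basis_single] using hd)) x y

@[simp]
lemma derivationOfSingle_single (d : G → R[G])
    (hd : ∀ g h, d (g + h) = single g 1 * d h + single h 1 * d g) (g : G) :
    derivationOfSingle d hd (single g 1) = d g :=
  constr_basis_single d g

end DerivationOfSingle

variable {R Γ : Type*} [CommRing R] [AddCommMonoid Γ] (φ : Γ →+ R)

lemma natCast_smul_single_add_sub_one (α : Γ) (k i : ℕ) (r : R) :
    (i : R) • single (α, k + (i - 1)) r = (i : R) • single (α, k + i - 1) r := by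
  rcases i with _ | i
  · simp
  · rw [Nat.add_sub_cancel, ← add_assoc, Nat.add_sub_cancel]

noncomputable def expPolyDeriv : Derivation R R[Γ × ℕ] R[Γ × ℕ] :=
  derivationOfSingle (fun p => φ p.1 • single p (1 : R) + (p.2 : R) • single (p.1, p.2 - 1) 1) (by
    rintro ⟨α, i⟩ ⟨β, j⟩
    simp only [mul_add, mul_smul_comm, single_mul_single, Prod.mk_add_mk, mul_one,
      natCast_smul_single_add_sub_one, add_comm β α, add_comm j i, map_add, Nat.cast_add]
    module)

lemma expPolyDeriv_single (α : Γ) (i : ℕ) :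
    expPolyDeriv φ (single (α, i) 1) =
      φ α • single (α, i) 1 + (i : R) • single (α, i - 1) 1 :=
  derivationOfSingle_single _ _ _

lemma wittBracket_expPolyDeriv_single (α β : Γ) (i j : ℕ) :
    (expPolyDeriv φ).wittBracket (single (α, i) 1) (single (β, j) 1) =
      (φ β - φ α) • single (α + β, i + j) 1 + ((j : R) - i) • single (α + β, i + j - 1) 1 := by
  rw [Derivation.wittBracket_apply, expPolyDeriv_single, expPolyDeriv_single]
  simp only [mul_add, mul_smul_comm, single_mul_single, Prod.mk_add_mk, mul_one,
    natCast_smul_single_add_sub_one, add_comm β α, add_comm j i]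
  module

end AddMonoidAlgebra

/-- The bracket [x_{α,i}, x_{β,j}] = (β−α)x_{α+β,i+j} + (j−i)x_{α+β,i+j−1}
defines a Lie algebra structure on the free ℂ-space with basis
{x_{α,i} : α ∈ Δ, i ∈ ℕ}. -/
theorem stmt_5 (Δ : AddSubgroup ℂ) :
    ∃ br : ((Δ × ℕ) →₀ ℂ) →ₗ[ℂ] ((Δ × ℕ) →₀ ℂ) →ₗ[ℂ] ((Δ × ℕ) →₀ ℂ),
      (∀ (α β : Δ) (i j : ℕ), br (single (α, i) 1) (single (β, j) 1) =
        ((β : ℂ) - (α : ℂ)) • single (α + β, i + j) 1 +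
        ((j : ℂ) - (i : ℂ)) • single (α + β, i + j - 1) 1) ∧
      (∀ u, br u u = 0) ∧
      (∀ u v w, br (br u v) w + br (br v w) u + br (br w u) v = 0) := by
  let e := AddMonoidAlgebra.coeffLinearEquiv (S := ℂ) (M := Δ × ℕ) ℂ
  let W := (AddMonoidAlgebra.expPolyDeriv Δ.subtype).wittBracket
  refine ⟨(W.compl₁₂ e.symm.toLinearMap e.symm.toLinearMap).compr₂ e.toLinearMap,
    fun α β i j => ?_, fun u => ?_, fun u v w => ?_⟩
  · exact congrArg e (AddMonoidAlgebra.wittBracket_expPolyDeriv_single _ α β i j)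
  · exact congrArg e (Derivation.wittBracket_self _ _)
  · simp only [LinearMap.compr₂_apply, LinearMap.compl₁₂_apply, LinearEquiv.coe_coe,
      LinearEquiv.symm_apply_apply, ← map_add]
    exact congrArg e (Derivation.wittBracket_jacobi _ _ _ _)
end

section
/- Let (A,·,[·,·]) be a Lie–Poisson algebra over ℂ, i.e., (A,·) is commutative associative, (A,[·,·]) is a Lie algebra, and [u, v·w] = [u,v]·w + v·[u,w] for all u,v,w. Let d be a derivation of (A,·) and ξ ∈ ℂ a constant such that d[u,v] = [d(u),v] + [u,d(v)] + ξ[u,v] for all u,v. Define u∘v = u·d(v) + ξ·u·v. Then [w∘u,v] − [w∘v,u] + [w,u]∘v − [w,v]∘u − w∘[u,v] = 0 for all u,v,w ∈ A, so (A,[·,·],∘) is a Gel'fand–Dorfman bialgebra. -/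
/-- For a Lie–Poisson algebra (A,·,[·,·]) over ℂ with a derivation d of (A,·)
satisfying d[u,v] = [d u, v] + [u, d v] + ξ[u,v], the product
u∘v = u·d(v) + ξ u v satisfies the Gel'fand–Dorfman compatibility identity. -/
theorem stmt_6 (A : Type*) [CommRing A] [Algebra ℂ A]
    (br : A →ₗ[ℂ] A →ₗ[ℂ] A)
    (halt : ∀ u : A, br u u = 0)
    (hjac : ∀ u v w : A, br (br u v) w + br (br v w) u + br (br w u) v = 0)
    (hleib : ∀ u v w : A, br u (v * w) = br u v * w + v * br u w)
    (d : A →ₗ[ℂ] A) (hd : ∀ u v : A, d (u * v) = d u * v + u * d v)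
    (ξ : ℂ) (hdbr : ∀ u v : A, d (br u v) = br (d u) v + br u (d v) + ξ • br u v)
    (circ : A → A → A) (hcirc : ∀ u v : A, circ u v = u * d v + ξ • (u * v)) :
    ∀ u v w : A,
      br (circ w u) v - br (circ w v) u + circ (br w u) v - circ (br w v) u -
        circ w (br u v) = 0 := by
  intro u v w
  have hanti : ∀ a b : A, br a b = -br b a := by
    intro a b
    have h := halt (a + b)
    simp only [map_add, LinearMap.add_apply, halt, zero_add, add_zero] at h
    exact eq_neg_of_add_eq_zero_right h
  have h1 : ∀ a b c : A, br (a * b) c = -(br c a * b) - a * br c b := by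
    intro a b c
    rw [hanti, hleib]; ring
  simp only [hcirc, map_add, map_smul, LinearMap.add_apply, LinearMap.smul_apply,
    hd, hdbr, h1, hleib, smul_add, mul_add, mul_smul_comm]
  rw [hanti v (d u), hanti v w, hanti v u, hanti u w]
  simp only [Algebra.smul_def]
  ring
end

section
/- Let (A,·) be a commutative associative algebra over ℂ with two commuting derivations d₁, d₂. Define [u,v]_{1,2} = d₁(u)d₂(v) − d₂(u)d₁(v) and [u,v]₁ = u d₁(v) − d₁(u) v. Then for every λ ∈ ℂ, the bracket [u,v] = [u,v]_{1,2} + λ[u,v]₁ defines a Lie algebra structure on A. -/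
/-- For commuting derivations d₁, d₂ of a commutative associative ℂ-algebra A
and λ ∈ ℂ, the bracket [u,v] = (d₁u·d₂v − d₂u·d₁v) + λ(u·d₁v − d₁u·v)
defines a Lie algebra structure on A. -/
theorem stmt_7 (A : Type*) [CommRing A] [Algebra ℂ A]
    (d₁ d₂ : A →ₗ[ℂ] A)
    (hd₁ : ∀ u v : A, d₁ (u * v) = d₁ u * v + u * d₁ v)
    (hd₂ : ∀ u v : A, d₂ (u * v) = d₂ u * v + u * d₂ v)
    (hcomm : ∀ u : A, d₁ (d₂ u) = d₂ (d₁ u))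
    (lam : ℂ) (br : A → A → A)
    (hbr : ∀ u v : A, br u v =
      (d₁ u * d₂ v - d₂ u * d₁ v) + lam • (u * d₁ v - d₁ u * v)) :
    (∀ u : A, br u u = 0) ∧
    (∀ u v w : A, br (br u v) w + br (br v w) u + br (br w u) v = 0) := by
  constructor
  · intro u; rw [hbr, mul_comm u (d₁ u), mul_comm (d₁ u) (d₂ u)]; simp
  · intro u v w
    simp only [hbr, map_add, map_sub, map_smul]
    simp only [hd₁, hd₂, hcomm]
    simp only [Algebra.smul_def]
    ring
end

section
/- Let (A,·) be a commutative associative algebra over ℂ with mutually commuting derivations d₁, d₂, d₃. Define [u,v]_{i,j} = d_i(u)d_j(v) − d_j(u)d_i(v) and [u,v]_l = u d_l(v) − d_l(u) v. Then the cyclic sum [[u,v]_{i,j}, w]_l + [[u,v]_l, w]_{i,j} + [[v,w]_{i,j}, u]_l + [[v,w]_l, u]_{i,j} + [[w,u]_{i,j}, v]_l + [[w,u]_l, v]_{i,j} equals d_i(u)d_l(v)d_j(w) + d_j(u)d_i(v)d_l(w) + d_l(u)d_j(v)d_i(w) − d_i(u)d_j(v)d_l(w) − d_j(u)d_l(v)d_i(w)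 − d_l(u)d_i(v)d_j(w) for all u,v,w ∈ A. -/
/-- For pairwise commuting derivations d₁,d₂,d₃ of a commutative associative
ℂ-algebra, the cyclic sum of mixed brackets equals the stated alternating
expression. -/
theorem stmt_8 (A : Type*) [CommRing A] [Algebra ℂ A]
    (d : Fin 3 → (A →ₗ[ℂ] A))
    (hd : ∀ k : Fin 3, ∀ u v : A, d k (u * v) = d k u * v + u * d k v)
    (hcomm : ∀ k m : Fin 3, ∀ u : A, d k (d m u) = d m (d k u))
    (i j l : Fin 3)
    (brij : A → A → A) (hbrij : ∀ u v, brij u v = d i u * d j v - d j u * d i v)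
    (brl : A → A → A) (hbrl : ∀ u v, brl u v = u * d l v - d l u * v) :
    ∀ u v w : A,
      brl (brij u v) w + brij (brl u v) w + brl (brij v w) u +
        brij (brl v w) u + brl (brij w u) v + brij (brl w u) v =
      d i u * d l v * d j w + d j u * d i v * d l w + d l u * d j v * d i w -
        d i u * d j v * d l w - d j u * d l v * d i w - d l u * d i v * d j w := by
  intro u v w
  simp only [hbrij, hbrl, map_sub, map_add, hd]
  simp only [hcomm i l, hcomm j l]
  ring
end

section
/- Let Δ be an additive subgroup of ℂ, let b ∈ ℂ, and let φ: Δ → ℂ be an additive group homomorphism. On the vector space A with basis {x_α : α ∈ Δ}, the bracket [x_α, x_β] = (1/b)(φ(β)α − φ(α)β + b(φ(β) − φ(α))) x_{α+β} (assuming b ≠ 0) defines a Lie algebra structure on A, and together with x_α ∘ x_β = (β+b)x_{α+β} satisfies the Gel'fand–Dorfman compatibility [x_γ∘x_α, x_β] − [x_γ∘x_β, x_α] + [x_γ,x_α]∘x_β − [x_γ,x_β]∘x_α − x_γ∘[x_α,x_β] = 0. -/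
/-!
Both operations are twisted group-algebra products `x_α · x_β = c(α, β) x_{α+β}` on `Δ →₀ ℂ`.
The Lie and Gel'fand–Dorfman identities are trilinear, so it suffices to check them on basis
vectors, where they become polynomial identities between the structure constants; these follow
from the additivity of `φ` by ring normalization.
-/

open Finsupp

namespace Finsupp

variable {R ι N : Type*} [CommRing R] [AddCommGroup N]

theorem forall₃_eq_zero_of_single {F : (ι →₀ R) → (ι →₀ R) → (ι →₀ R) → N}
    (add_left : ∀ u u' v w, F (u + u') v w = F u v w + F u' v w)
    (add_mid : ∀ u v v' w, F u (v + v') w = F u v w + F u v' w)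
    (add_right : ∀ u v w w', F u v (w + w') = F u v w + F u v w')
    (hsingle : ∀ α β γ x y z, F (single α x) (single β y) (single γ z) = 0) :
    ∀ u v w, F u v w = 0 := by
  intro u v w
  induction u using Finsupp.induction_linear with
  | zero => simpa using add_left 0 0 v w
  | add u u' hu hu' => rw [add_left, hu, hu', add_zero]
  | single α x =>
  induction v using Finsupp.induction_linear with
  | zero => simpa using add_mid (single α x) 0 0 w
  | add v v' hv hv' => rw [add_mid, hv, hv', add_zero]
  | single β y =>
  induction w using Finsupp.induction_linear with
  | zero => simpa using add_right (single α x) (single β y) 0 0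
  | add w w' hw hw' => rw [add_right, hw, hw', add_zero]
  | single γ z => exact hsingle α β γ x y z

end Finsupp

section TwistedMul

variable {R Γ : Type*} [CommRing R] [AddCommMonoid Γ]

noncomputable def twistedMul (c : Γ → Γ → R) : (Γ →₀ R) →ₗ[R] (Γ →₀ R) →ₗ[R] (Γ →₀ R) :=
  Finsupp.lift _ R Γ fun α => Finsupp.lift _ R Γ fun β => single (α + β) (c α β)

variable (c : Γ → Γ → R)

@[simp]
theorem twistedMul_single_single (α β : Γ) (x y : R) :
    twistedMul c (single α x) (single β y) = single (α + β) (c α β * x * y) := by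
  simp only [twistedMul, lift_apply, LinearMap.smul_apply, zero_smul, sum_single_index,
    smul_single, smul_eq_mul, zero_mul, single_zero]
  ring_nf

theorem twistedMul_swap (hc : ∀ α β, c α β = -c β α) (u v : Γ →₀ R) :
    twistedMul c u v = -twistedMul c v u := by
  induction u using Finsupp.induction_linear with
  | zero => simp
  | add u u' hu hu' => simp only [map_add, LinearMap.add_apply, hu, hu', neg_add]
  | single α x =>
  induction v using Finsupp.induction_linear with
  | zero => simp
  | add v v' hv hv' => simp only [map_add, LinearMap.add_apply, hv, hv', neg_add]
  | single β y =>
    rw [twistedMul_single_single, twistedMul_single_single, ← single_neg, add_comm, hc]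
    ring_nf

theorem twistedMul_self (hc : ∀ α β, c α β = -c β α) (hdiag : ∀ α, c α α = 0) (u : Γ →₀ R) :
    twistedMul c u u = 0 := by
  induction u using Finsupp.induction_linear with
  | zero => simp
  | add u v hu hv =>
    simp only [map_add, LinearMap.add_apply, hu, hv, twistedMul_swap c hc v u]
    abel
  | single α x => simp [hdiag]

theorem twistedMul_jacobi
    (hc : ∀ α β γ, c α β * c (α + β) γ + c β γ * c (β + γ) α + c γ α * c (γ + α) β = 0)
    (u v w : Γ →₀ R) :
    twistedMul c (twistedMul c u v) w + twistedMul c (twistedMul c v w) u +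
      twistedMul c (twistedMul c w u) v = 0 := by
  revert u v w
  refine Finsupp.forall₃_eq_zero_of_single ?_ ?_ ?_ fun α β γ x y z => ?_
  · intros; simp only [map_add, LinearMap.add_apply]; abel
  · intros; simp only [map_add, LinearMap.add_apply]; abel
  · intros; simp only [map_add, LinearMap.add_apply]; abel
  · simp only [twistedMul_single_single]
    rw [show β + γ + α = α + β + γ by abel, show γ + α + β = α + β + γ by abel, ← single_add,
      ← single_add, single_eq_zero]
    linear_combination x * y * z * hc α β γ

theorem twistedMul_gelfandDorfman (n : Γ → Γ → R)
    (h : ∀ γ α β, n γ α * c (γ + α) β - n γ β * c (γ + β) α + c γ α * n (γ + α) β -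
      c γ β * n (γ + β) α - c α β * n γ (α + β) = 0)
    (u v w : Γ →₀ R) :
    twistedMul c (twistedMul n w u) v - twistedMul c (twistedMul n w v) u +
      twistedMul n (twistedMul c w u) v - twistedMul n (twistedMul c w v) u -
      twistedMul n w (twistedMul c u v) = 0 := by
  revert u v w
  refine Finsupp.forall₃_eq_zero_of_single ?_ ?_ ?_ fun α β γ x y z => ?_
  · intros; simp only [map_add, LinearMap.add_apply]; abel
  · intros; simp only [map_add, LinearMap.add_apply]; abel
  · intros; simp only [map_add, LinearMap.add_apply]; abel
  · simp only [twistedMul_single_single]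
    rw [show γ + β + α = γ + α + β by abel, show γ + (α + β) = γ + α + β by abel, ← single_sub,
      ← single_add, ← single_sub, ← single_sub, single_eq_zero]
    linear_combination x * y * z * h γ α β

end TwistedMul

section GelfandDorfman

variable {R Γ : Type*} [CommRing R] [AddCommGroup Γ] (ι φ : Γ →+ R) (k b : R)

/-- `k` plays the role of `1 / b`. -/
def bracketCoeff (α β : Γ) : R := k * (φ β * ι α - φ α * ι β + b * (φ β - φ α))

def novikovCoeff (_α β : Γ) : R := ι β + b

theorem bracketCoeff_antisymm (α β : Γ) :
    bracketCoeff ι φ k b α β = -bracketCoeff ι φ k b β α := by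
  unfold bracketCoeff; ring

theorem bracketCoeff_self (α : Γ) : bracketCoeff ι φ k b α α = 0 := by
  unfold bracketCoeff; ring

theorem bracketCoeff_jacobi (α β γ : Γ) :
    bracketCoeff ι φ k b α β * bracketCoeff ι φ k b (α + β) γ +
      bracketCoeff ι φ k b β γ * bracketCoeff ι φ k b (β + γ) α +
      bracketCoeff ι φ k b γ α * bracketCoeff ι φ k b (γ + α) β = 0 := by
  simp only [bracketCoeff, map_add]; ring

theorem bracketCoeff_novikovCoeff_compat (γ α β : Γ) :
    novikovCoeff ι b γ α * bracketCoeff ι φ k b (γ + α) β -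
      novikovCoeff ι b γ β * bracketCoeff ι φ k b (γ + β) α +
      bracketCoeff ι φ k b γ α * novikovCoeff ι b (γ + α) β -
      bracketCoeff ι φ k b γ β * novikovCoeff ι b (γ + β) α -
      bracketCoeff ι φ k b α β * novikovCoeff ι b γ (α + β) = 0 := by
  simp only [bracketCoeff, novikovCoeff, map_add]; ring

end GelfandDorfman

theorem stmt_11_general (Δ : AddSubgroup ℂ) (b : ℂ)
    (φ : Δ →+ ℂ) :
    ∃ br circ : (Δ →₀ ℂ) →ₗ[ℂ] (Δ →₀ ℂ) →ₗ[ℂ] (Δ →₀ ℂ),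
      (∀ α β : Δ, br (single α 1) (single β 1) =
        ((1 / b) * (φ β * (α : ℂ) - φ α * (β : ℂ) + b * (φ β - φ α))) •
          single (α + β) 1) ∧
      (∀ α β : Δ, circ (single α 1) (single β 1) =
        ((β : ℂ) + b) • single (α + β) 1) ∧
      (∀ u, br u u = 0) ∧
      (∀ u v w, br (br u v) w + br (br v w) u + br (br w u) v = 0) ∧
      (∀ u v w,
        br (circ w u) v - br (circ w v) u + circ (br w u) v - circ (br w v) u -
          circ w (br u v) = 0) := by
  let c := bracketCoeff Δ.subtype φ (1 / b) b
  let n := novikovCoeff Δ.subtype b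
  refine ⟨twistedMul c, twistedMul n, fun α β => ?_, fun α β => ?_,
    twistedMul_self c (bracketCoeff_antisymm _ _ _ _) (bracketCoeff_self _ _ _ _),
    twistedMul_jacobi c (bracketCoeff_jacobi _ _ _ _),
    twistedMul_gelfandDorfman c n (bracketCoeff_novikovCoeff_compat _ _ _ _)⟩ <;>
  rw [twistedMul_single_single, mul_one, mul_one, smul_single_one] <;> rfl

/-- For b ≠ 0 and an additive homomorphism φ : Δ → ℂ, the bracket
[x_α,x_β] = (1/b)(φ(β)α − φ(α)β + b(φ(β)−φ(α))) x_{α+β} is a Lie bracket on the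
free space on Δ, compatible (in the Gel'fand–Dorfman sense) with the Novikov
product x_α∘x_β = (β+b)x_{α+β}. -/
theorem stmt_11 (Δ : AddSubgroup ℂ) (b : ℂ) (hb : b ≠ 0)
    (φ : Δ →+ ℂ) :
    ∃ br circ : (Δ →₀ ℂ) →ₗ[ℂ] (Δ →₀ ℂ) →ₗ[ℂ] (Δ →₀ ℂ),
      (∀ α β : Δ, br (single α 1) (single β 1) =
        ((1 / b) * (φ β * (α : ℂ) - φ α * (β : ℂ) + b * (φ β - φ α))) •
          single (α + β) 1) ∧
      (∀ α β : Δ, circ (single α 1) (single β 1) =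
        ((β : ℂ) + b) • single (α + β) 1) ∧
      (∀ u, br u u = 0) ∧
      (∀ u v w, br (br u v) w + br (br v w) u + br (br w u) v = 0) ∧
      (∀ u v w,
        br (circ w u) v - br (circ w v) u + circ (br w u) v - circ (br w v) u -
          circ w (br u v) = 0) :=
  stmt_11_general Δ b φ
end

section
/- Let Δ be an additive subgroup of ℂ, 0 ≠ b ∈ Δ, and let φ₁, φ₂: Δ → ℂ be additive group homomorphisms with φ₁(b) = 0 and φ₂(b) = −1. Define θ(α,β) = φ₁(α)φ₂(β) − φ₁(β)φ₂(α). Then θ is skew-symmetric and satisfies θ(α,β)θ(α+β+b, γ) + θ(β,γ)θ(β+γ+b, α) + θ(γ,α)θ(γ+α+b, β) = 0 for all α,β,γ ∈ Δ. -/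
/-- For additive homomorphisms φ₁, φ₂ : Δ → ℂ with φ₁(b) = 0, φ₂(b) = −1
(0 ≠ b ∈ Δ), θ(α,β) = φ₁(α)φ₂(β) − φ₁(β)φ₂(α) is skew-symmetric and satisfies
the cyclic identity. -/
theorem stmt_14 (Δ : AddSubgroup ℂ) (b : Δ) (hb : b ≠ 0)
    (φ₁ φ₂ : Δ →+ ℂ) (h₁ : φ₁ b = 0) (h₂ : φ₂ b = -1)
    (θ : Δ → Δ → ℂ) (hθ : ∀ α β : Δ, θ α β = φ₁ α * φ₂ β - φ₁ β * φ₂ α) :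
    (∀ α β : Δ, θ α β = -θ β α) ∧
    (∀ α β γ : Δ,
      θ α β * θ (α + β + b) γ + θ β γ * θ (β + γ + b) α +
        θ γ α * θ (γ + α + b) β = 0) := by
  constructor
  · intro α β; simp [hθ]
  · intro α β γ
    simp only [hθ, map_add, h₁, h₂]
    ring
end

section
/- Let Δ be an additive subgroup of ℂ, φ: Δ → ℂ an additive group homomorphism, λ ∈ ℂ, and 0 ≠ b ∈ ℂ. On the vector space A with basis {x_{α,i} : α ∈ Δ, i ∈ ℕ}, define [x_{α,i}, x_{β,j}] = (1/b)((α+b)φ(β) − (β+b)φ(α)) x_{α+β, i+j} + (1/b)(i(φ(β) − λ(β+b)) + j(λ(α+b) − φ(α))) x_{α+β, i+j−1} and x_{α,i} ∘ x_{β,j} = (β+b) x_{α+β,i+j} + j x_{α+β, i+j−1} (terms with negative second index are zero). Then [·,·] is a Lie bracket, ∘ is a Novikov product, and the pair satisfies the Gel'fand–Dorfman compatibility [w∘u,v] − [w∘v,u] + [w,u]∘v − [w,v]∘u − w∘[u,v] = 0. -/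
/-!
Let `A` be a commutative algebra with commuting derivations `d₁, d₂`, let `b` be a scalar and
`D = d₂ + b`. Then `x ∘ y = x · D y` is a Novikov product and `[x, y] = D x · d₁ y - d₁ x · D y`
is a Lie bracket compatible with it: after expanding with the Leibniz rule and `d₁ D = D d₁`,
every identity becomes a polynomial identity. The operations of the theorem are these for
`A = ℂ[Δ × ℕ]` (so `x_{α,i} = e^α tⁱ`), `d₂ = (α-grading) + ∂_t` and
`d₁ = b⁻¹ ((φ-grading) + λ ∂_t)`.
-/

open Finsupp

namespace Derivation

variable {K A : Type*} [CommRing K] [CommRing A] [Algebra K A]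

noncomputable def novikovProduct (d : Derivation K A A) (b : K) : A →ₗ[K] A →ₗ[K] A :=
  (LinearMap.mul K A).compl₂ ((d : A →ₗ[K] A) + b • LinearMap.id)

noncomputable def gelfandDorfmanBracket (d₁ d₂ : Derivation K A A) (b : K) :
    A →ₗ[K] A →ₗ[K] A :=
  (LinearMap.mul K A).compl₁₂ ((d₂ : A →ₗ[K] A) + b • LinearMap.id) d₁ -
    (LinearMap.mul K A).compl₁₂ d₁ ((d₂ : A →ₗ[K] A) + b • LinearMap.id)

variable (d₁ d₂ : Derivation K A A) (b : K)

theorem novikovProduct_apply (x y : A) : novikovProduct d₂ b x y = x * (d₂ y + b • y) := rfl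

theorem gelfandDorfmanBracket_apply (x y : A) :
    gelfandDorfmanBracket d₁ d₂ b x y = (d₂ x + b • x) * d₁ y - d₁ x * (d₂ y + b • y) := rfl

theorem gelfandDorfmanBracket_smul_left (c : K) (x y : A) :
    gelfandDorfmanBracket (c • d₁) d₂ b x y = c • gelfandDorfmanBracket d₁ d₂ b x y := by
  simp only [gelfandDorfmanBracket_apply, smul_apply, smul_sub, smul_mul_assoc, mul_smul_comm]

theorem novikovProduct_right_comm (x y z : A) :
    novikovProduct d₂ b (novikovProduct d₂ b x y) z =
      novikovProduct d₂ b (novikovProduct d₂ b x z) y := by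
  simp only [novikovProduct_apply]
  ring

theorem novikovProduct_left_symm (x y z : A) :
    novikovProduct d₂ b (novikovProduct d₂ b x y) z - novikovProduct d₂ b x (novikovProduct d₂ b y z) =
      novikovProduct d₂ b (novikovProduct d₂ b y x) z -
        novikovProduct d₂ b y (novikovProduct d₂ b x z) := by
  simp only [novikovProduct_apply, map_add, leibniz, smul_eq_mul, Algebra.smul_def]
  ring

theorem gelfandDorfmanBracket_self (x : A) : gelfandDorfmanBracket d₁ d₂ b x x = 0 := by
  rw [gelfandDorfmanBracket_apply]
  ring

variable {d₁ d₂}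

theorem apply_apply_comm_of_commutator_eq_zero (h : ⁅d₁, d₂⁆ = 0) (a : A) :
    d₁ (d₂ a) = d₂ (d₁ a) :=
  sub_eq_zero.mp (by rw [← commutator_apply, h, zero_apply])

theorem gelfandDorfmanBracket_jacobi (h : ⁅d₁, d₂⁆ = 0) (x y z : A) :
    gelfandDorfmanBracket d₁ d₂ b (gelfandDorfmanBracket d₁ d₂ b x y) z +
      gelfandDorfmanBracket d₁ d₂ b (gelfandDorfmanBracket d₁ d₂ b y z) x +
      gelfandDorfmanBracket d₁ d₂ b (gelfandDorfmanBracket d₁ d₂ b z x) y = 0 := by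
  simp only [gelfandDorfmanBracket_apply]
  simp only [map_add, map_sub, map_smul, leibniz, smul_eq_mul,
    apply_apply_comm_of_commutator_eq_zero h]
  simp only [Algebra.smul_def]
  ring

theorem gelfandDorfmanBracket_novikovProduct_compat (h : ⁅d₁, d₂⁆ = 0) (u v w : A) :
    gelfandDorfmanBracket d₁ d₂ b (novikovProduct d₂ b w u) v -
        gelfandDorfmanBracket d₁ d₂ b (novikovProduct d₂ b w v) u +
      novikovProduct d₂ b (gelfandDorfmanBracket d₁ d₂ b w u) v -
        novikovProduct d₂ b (gelfandDorfmanBracket d₁ d₂ b w v) u -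
      novikovProduct d₂ b w (gelfandDorfmanBracket d₁ d₂ b u v) = 0 := by
  simp only [gelfandDorfmanBracket_apply, novikovProduct_apply]
  simp only [map_add, map_sub, map_smul, leibniz, smul_eq_mul,
    apply_apply_comm_of_commutator_eq_zero h]
  simp only [Algebra.smul_def]
  ring

end Derivation

namespace AddMonoidAlgebra

variable {K M : Type*} [CommRing K] [AddCommMonoid M]

theorem derivation_ext {D₁ D₂ : Derivation K K[M] K[M]}
    (h : ∀ m, D₁ (single m 1) = D₂ (single m 1)) : D₁ = D₂ := by
  have : (D₁ : K[M] →ₗ[K] K[M]) = D₂ := (basis M K).ext fun m => by simpa using h m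
  exact Derivation.ext fun x => LinearMap.congr_fun this x

noncomputable def mkDerivation (v : M → K[M])
    (h : ∀ m n, v (m + n) = single m 1 * v n + single n 1 * v m) : Derivation K K[M] K[M] :=
  Derivation.mk' ((basis M K).constr K v) fun x y => by
    have hv (m : M) : (basis M K).constr K v (single m 1) = v m := by
      rw [← basis_apply, Module.Basis.constr_basis]
    have leibniz : (LinearMap.mul K K[M]).compr₂ ((basis M K).constr K v) =
        (LinearMap.mul K K[M]).compl₂ ((basis M K).constr K v) +
          ((LinearMap.mul K K[M]).compl₂ ((basis M K).constr K v)).flip := by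
      ext m n : 4
      simpa [single_mul_single, hv] using h m n
    simpa using congr($leibniz x y)

theorem mkDerivation_single (v : M → K[M]) (h) (m : M) : mkDerivation v h (single m 1) = v m := by
  rw [mkDerivation, Derivation.coe_mk', ← basis_apply, Module.Basis.constr_basis]

noncomputable def gradingDerivation (f : M →+ K) : Derivation K K[M] K[M] :=
  mkDerivation (fun m => f m • single m 1) fun m n => by
    simp only [mul_smul_comm, single_mul_single, mul_one, map_add, add_smul, add_comm]

theorem gradingDerivation_single (f : M →+ K) (m : M) :
    gradingDerivation f (single m 1) = f m • single m 1 :=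
  mkDerivation_single _ _ m

variable {G : Type*} [AddCommMonoid G]

-- The factor `n` kills the only case, `n = 0`, where `n - 1` truncates.
theorem natCast_smul_single_add_sub_one_s17 (g : G) (m n : ℕ) (c : K) :
    (n : K) • single (g, m + (n - 1)) c = (n : K) • single (g, m + n - 1) c := by
  rcases n with _ | n <;> simp

noncomputable def derivativeSnd : Derivation K K[G × ℕ] K[G × ℕ] :=
  mkDerivation (fun p => (p.2 : K) • single (p.1, p.2 - 1) 1) fun ⟨g, m⟩ ⟨h, n⟩ => by
    simp only [mul_smul_comm, single_mul_single, mul_one, Prod.mk_add_mk,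
      natCast_smul_single_add_sub_one_s17, add_comm h g, add_comm n m, Nat.cast_add, add_smul]
    abel

theorem derivativeSnd_single (g : G) (n : ℕ) :
    (derivativeSnd : Derivation K K[G × ℕ] K[G × ℕ]) (single (g, n) 1) =
      (n : K) • single (g, n - 1) 1 :=
  mkDerivation_single _ _ _

noncomputable def gradingAddDerivative (f : G →+ K) (c : K) : Derivation K K[G × ℕ] K[G × ℕ] :=
  gradingDerivation (f.comp (AddMonoidHom.fst G ℕ)) + c • derivativeSnd

theorem gradingAddDerivative_single (f : G →+ K) (c : K) (g : G) (n : ℕ) :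
    gradingAddDerivative f c (single (g, n) 1) =
      f g • single (g, n) 1 + c • (n : K) • single (g, n - 1) 1 := by
  simp [gradingAddDerivative, gradingDerivation_single, derivativeSnd_single]

theorem commutator_gradingAddDerivative (f₁ f₂ : G →+ K) (c₁ c₂ : K) :
    ⁅gradingAddDerivative f₁ c₁, gradingAddDerivative f₂ c₂⁆ = 0 := by
  refine derivation_ext fun ⟨g, n⟩ => ?_
  simp only [Derivation.commutator_apply, Derivation.zero_apply, gradingAddDerivative_single,
    map_add, Derivation.map_smul]
  module

theorem novikovProduct_single (f : G →+ K) (b : K) (α β : G) (i j : ℕ) :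
    Derivation.novikovProduct (gradingAddDerivative f 1) b (single (α, i) 1) (single (β, j) 1) =
      (f β + b) • single (α + β, i + j) 1 + (j : K) • single (α + β, i + j - 1) 1 := by
  simp only [Derivation.novikovProduct_apply, gradingAddDerivative_single, mul_add,
    mul_smul_comm, single_mul_single, mul_one, Prod.mk_add_mk, natCast_smul_single_add_sub_one_s17]
  module

theorem gelfandDorfmanBracket_single (f₁ f₂ : G →+ K) (c b : K) (α β : G) (i j : ℕ) :
    Derivation.gelfandDorfmanBracket (gradingAddDerivative f₁ c) (gradingAddDerivative f₂ 1) b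
        (single (α, i) 1) (single (β, j) 1) =
      ((f₂ α + b) * f₁ β - (f₂ β + b) * f₁ α) • single (α + β, i + j) 1 +
      ((i : K) * (f₁ β - c * (f₂ β + b)) + (j : K) * (c * (f₂ α + b) - f₁ α)) •
        single (α + β, i + j - 1) 1 := by
  simp only [Derivation.gelfandDorfmanBracket_apply, gradingAddDerivative_single, add_mul,
    mul_add, smul_mul_assoc, mul_smul_comm, single_mul_single, mul_one, Prod.mk_add_mk]
  rcases i with _ | i <;> rcases j with _ | j <;>
    simp only [Nat.cast_zero, zero_smul, smul_zero, add_zero, zero_add, Nat.add_sub_cancel,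
      ← add_assoc, Nat.add_right_comm _ 1, Nat.cast_add, Nat.cast_one] <;>
    module

end AddMonoidAlgebra

theorem stmt_17_general (Δ : AddSubgroup ℂ) (φ : Δ →+ ℂ) (lam b : ℂ) :
    ∃ br circ : ((Δ × ℕ) →₀ ℂ) →ₗ[ℂ] ((Δ × ℕ) →₀ ℂ) →ₗ[ℂ] ((Δ × ℕ) →₀ ℂ),
      (∀ (α β : Δ) (i j : ℕ), br (single (α, i) 1) (single (β, j) 1) =
        ((1 / b) * (((α : ℂ) + b) * φ β - ((β : ℂ) + b) * φ α)) •
          single (α + β, i + j) 1 +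
        ((1 / b) * ((i : ℂ) * (φ β - lam * ((β : ℂ) + b)) +
          (j : ℂ) * (lam * ((α : ℂ) + b) - φ α))) •
          single (α + β, i + j - 1) 1) ∧
      (∀ (α β : Δ) (i j : ℕ), circ (single (α, i) 1) (single (β, j) 1) =
        ((β : ℂ) + b) • single (α + β, i + j) 1 +
        (j : ℂ) • single (α + β, i + j - 1) 1) ∧
      (∀ u, br u u = 0) ∧
      (∀ u v w, br (br u v) w + br (br v w) u + br (br w u) v = 0) ∧
      (∀ u v w, circ (circ u v) w = circ (circ u w) v) ∧
      (∀ u v w,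
        circ (circ u v) w - circ u (circ v w) =
        circ (circ v u) w - circ v (circ u w)) ∧
      (∀ u v w,
        br (circ w u) v - br (circ w v) u + circ (br w u) v - circ (br w v) u -
          circ w (br u v) = 0) := by
  let e := AddMonoidAlgebra.coeffLinearEquiv (R := ℂ) (S := ℂ) (M := Δ × ℕ)
  let T : (AddMonoidAlgebra ℂ (Δ × ℕ) →ₗ[ℂ] _ →ₗ[ℂ] _) ≃ₗ[ℂ] ((Δ × ℕ →₀ ℂ) →ₗ[ℂ] _ →ₗ[ℂ] _) :=
    e.arrowCongr (e.arrowCongr e)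
  have hT B u v : T B u v = e (B (e.symm u) (e.symm v)) := rfl
  have he_single (p : Δ × ℕ) : e (AddMonoidAlgebra.single p 1) = single p 1 := rfl
  have he_symm_single (p : Δ × ℕ) : e.symm (single p 1) = AddMonoidAlgebra.single p 1 := rfl
  have hcomm := (smul_lie (1 / b) (AddMonoidAlgebra.gradingAddDerivative φ lam)
    (AddMonoidAlgebra.gradingAddDerivative Δ.subtype 1)).trans
    (by rw [AddMonoidAlgebra.commutator_gradingAddDerivative, smul_zero])
  refine ⟨T (Derivation.gelfandDorfmanBracket
      ((1 / b) • AddMonoidAlgebra.gradingAddDerivative φ lam)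
      (AddMonoidAlgebra.gradingAddDerivative Δ.subtype 1) b),
    T (Derivation.novikovProduct (AddMonoidAlgebra.gradingAddDerivative Δ.subtype 1) b),
    fun α β i j => ?_, fun α β i j => ?_, fun u => ?_, fun u v w => ?_, fun u v w => ?_,
    fun u v w => ?_, fun u v w => ?_⟩ <;>
    simp only [hT, he_symm_single, LinearEquiv.symm_apply_apply]
  · rw [Derivation.gelfandDorfmanBracket_smul_left, AddMonoidAlgebra.gelfandDorfmanBracket_single]
    simp only [map_add, _root_.map_smul, he_single, smul_add, smul_smul, AddSubgroup.coe_subtype]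
  · rw [AddMonoidAlgebra.novikovProduct_single]
    simp only [map_add, _root_.map_smul, he_single, AddSubgroup.coe_subtype]
  · rw [Derivation.gelfandDorfmanBracket_self, map_zero]
  · rw [← map_add, ← map_add, Derivation.gelfandDorfmanBracket_jacobi b hcomm, map_zero]
  · rw [Derivation.novikovProduct_right_comm]
  · rw [← map_sub, ← map_sub, Derivation.novikovProduct_left_symm]
  · rw [← map_sub, ← map_add, ← map_sub, ← map_sub,
      Derivation.gelfandDorfmanBracket_novikovProduct_compat b hcomm, map_zero]

/-- For an additive homomorphism φ : Δ → ℂ, λ ∈ ℂ and 0 ≠ b ∈ ℂ, the stated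
bracket and Novikov product on the free space with basis
{x_{α,i} : α ∈ Δ, i ∈ ℕ} form a Gel'fand–Dorfman bialgebra. -/
theorem stmt_17 (Δ : AddSubgroup ℂ) (φ : Δ →+ ℂ) (lam b : ℂ) (hb : b ≠ 0) :
    ∃ br circ : ((Δ × ℕ) →₀ ℂ) →ₗ[ℂ] ((Δ × ℕ) →₀ ℂ) →ₗ[ℂ] ((Δ × ℕ) →₀ ℂ),
      (∀ (α β : Δ) (i j : ℕ), br (single (α, i) 1) (single (β, j) 1) =
        ((1 / b) * (((α : ℂ) + b) * φ β - ((β : ℂ) + b) * φ α)) •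
          single (α + β, i + j) 1 +
        ((1 / b) * ((i : ℂ) * (φ β - lam * ((β : ℂ) + b)) +
          (j : ℂ) * (lam * ((α : ℂ) + b) - φ α))) •
          single (α + β, i + j - 1) 1) ∧
      (∀ (α β : Δ) (i j : ℕ), circ (single (α, i) 1) (single (β, j) 1) =
        ((β : ℂ) + b) • single (α + β, i + j) 1 +
        (j : ℂ) • single (α + β, i + j - 1) 1) ∧
      (∀ u, br u u = 0) ∧
      (∀ u v w, br (br u v) w + br (br v w) u + br (br w u) v = 0) ∧
      (∀ u v w, circ (circ u v) w = circ (circ u w) v) ∧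
      (∀ u v w,
        circ (circ u v) w - circ u (circ v w) =
        circ (circ v u) w - circ v (circ u w)) ∧
      (∀ u v w,
        br (circ w u) v - br (circ w v) u + circ (br w u) v - circ (br w v) u -
          circ w (br u v) = 0) :=
  stmt_17_general Δ φ lam b
end

section
/- Let Δ be an additive subgroup of ℂ, and let φ: Δ × Δ → ℂ be a skew-symmetric ℤ-bilinear form and ψ: Δ → ℂ an additive homomorphism. On the space with basis {x_{α,i} : α ∈ Δ, i ∈ ℕ}, the bracket [x_{α,i}, x_{β,j}] = φ(α,β) x_{α+β,i+j} + (iψ(β) − jψ(α)) x_{α+β,i+j−1} (terms with second index −1 are zero) defines a Lie algebra structure. -/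
/-!
Extend the second index from `ℕ` to `ℤ`. There the structure constants involve no truncated
subtraction, and the Jacobi identity on basis triples is a direct computation using additivity
of `φ` in its first argument, skew-symmetry of `φ` and additivity of `ψ`. The `ℕ`-indexed
bracket is the restriction of the `ℤ`-indexed one: the basis vector `x_{α+β,-1}` would only
occur with coefficient `0·ψ β - 0·ψ α`. So the Jacobi identity transfers along the injective
map `x_{α,i} ↦ x_{α,i}`. Skew-symmetry on basis vectors gives `[u,u] = 0` since `2 ≠ 0` in `ℂ`.
-/

open Finsupp

section Jacobiator

variable {R M N : Type*} [CommSemiring R] [AddCommMonoid M] [Module R M]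
  [AddCommMonoid N] [Module R N]

def jacobiator (br : M →ₗ[R] M →ₗ[R] M) (u v w : M) : M :=
  br (br u v) w + br (br v w) u + br (br w u) v

lemma jacobiator_rotate (br : M →ₗ[R] M →ₗ[R] M) (u v w : M) :
    jacobiator br u v w = jacobiator br v w u := by
  simp only [jacobiator]
  abel

lemma jacobiator_add_left (br : M →ₗ[R] M →ₗ[R] M) (u u' v w : M) :
    jacobiator br (u + u') v w = jacobiator br u v w + jacobiator br u' v w := by
  simp only [jacobiator, map_add, LinearMap.add_apply]
  abel

lemma jacobiator_smul_left (br : M →ₗ[R] M →ₗ[R] M) (a : R) (u v w : M) :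
    jacobiator br (a • u) v w = a • jacobiator br u v w := by
  simp only [jacobiator, map_smul, LinearMap.smul_apply, smul_add]

lemma jacobiator_eq_zero_of_injective {brM : M →ₗ[R] M →ₗ[R] M}
    {brN : N →ₗ[R] N →ₗ[R] N} {g : M →ₗ[R] N} (hg : Function.Injective g)
    (hbr : ∀ u v, g (brM u v) = brN (g u) (g v))
    (hN : ∀ u v w, jacobiator brN u v w = 0) (u v w : M) :
    jacobiator brM u v w = 0 := by
  apply hg
  simpa [jacobiator, hbr] using hN (g u) (g v) (g w)

end Jacobiator

namespace Finsupp

section CommSemiring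

variable {R ι : Type*} [CommSemiring R]

noncomputable def bilinOfBasis (B : ι → ι → ι →₀ R) :
    (ι →₀ R) →ₗ[R] (ι →₀ R) →ₗ[R] (ι →₀ R) :=
  linearCombination R fun p => linearCombination R (B p)

@[simp]
lemma bilinOfBasis_single (B : ι → ι → ι →₀ R) (p q : ι) (a b : R) :
    bilinOfBasis B (single p a) (single q b) = (a * b) • B p q := by
  simp [bilinOfBasis, mul_smul]

lemma mapDomain_bilinOfBasis {κ : Type*} (f : ι → κ) {B : ι → ι → ι →₀ R}
    {C : κ → κ → κ →₀ R} (hBC : ∀ p q, mapDomain f (B p q) = C (f p) (f q))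
    (u v : ι →₀ R) :
    mapDomain f (bilinOfBasis B u v) = bilinOfBasis C (mapDomain f u) (mapDomain f v) := by
  have : (bilinOfBasis B).compr₂ (lmapDomain R R f) =
      (bilinOfBasis C).compl₁₂ (lmapDomain R R f) (lmapDomain R R f) := by
    ext p q
    simp [hBC]
  exact LinearMap.congr_fun₂ this u v

lemma jacobiator_eq_zero_of_single_left (br : (ι →₀ R) →ₗ[R] (ι →₀ R) →ₗ[R] (ι →₀ R))
    {v w : ι →₀ R} (h : ∀ p, jacobiator br (single p 1) v w = 0) (u : ι →₀ R) :
    jacobiator br u v w = 0 := by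
  induction u using Finsupp.induction_linear with
  | zero => simpa using jacobiator_smul_left br 0 0 v w
  | add f g hf hg => rw [jacobiator_add_left, hf, hg, add_zero]
  | single p a => rw [← smul_single_one, jacobiator_smul_left, h, smul_zero]

lemma jacobiator_eq_zero_of_single (br : (ι →₀ R) →ₗ[R] (ι →₀ R) →ₗ[R] (ι →₀ R))
    (h : ∀ p q r, jacobiator br (single p 1) (single q 1) (single r 1) = 0)
    (u v w : ι →₀ R) : jacobiator br u v w = 0 := by
  refine jacobiator_eq_zero_of_single_left br (fun p => ?_) u
  rw [jacobiator_rotate]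
  refine jacobiator_eq_zero_of_single_left br (fun q => ?_) v
  rw [jacobiator_rotate]
  refine jacobiator_eq_zero_of_single_left br (fun r => ?_) w
  rw [jacobiator_rotate]
  exact h p q r

end CommSemiring

section CommRing

variable {R ι : Type*} [CommRing R]

lemma bilinOfBasis_swap {B : ι → ι → ι →₀ R} (hB : ∀ p q, B q p = -B p q)
    (u v : ι →₀ R) : bilinOfBasis B v u = -bilinOfBasis B u v := by
  have : (bilinOfBasis B).flip + bilinOfBasis B = 0 := by
    ext p q : 4
    simp [hB p q]
  exact eq_neg_of_add_eq_zero_left (LinearMap.congr_fun₂ this u v)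

lemma bilinOfBasis_self [IsAddTorsionFree R] {B : ι → ι → ι →₀ R}
    (hB : ∀ p q, B q p = -B p q) (u : ι →₀ R) : bilinOfBasis B u u = 0 :=
  self_eq_neg.mp (bilinOfBasis_swap hB u u)

end CommRing

end Finsupp

section BlockType

variable {A R : Type*} [AddCommMonoid A] [CommRing R] (φ : A → A → R) (ψ : A →+ R)

noncomputable def blockBracket (p q : A × ℤ) : A × ℤ →₀ R :=
  φ p.1 q.1 • single (p.1 + q.1, p.2 + q.2) 1 +
    ((p.2 : R) * ψ q.1 - (q.2 : R) * ψ p.1) • single (p.1 + q.1, p.2 + q.2 - 1) 1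

noncomputable def blockBracketNat (p q : A × ℕ) : A × ℕ →₀ R :=
  φ p.1 q.1 • single (p.1 + q.1, p.2 + q.2) 1 +
    ((p.2 : R) * ψ q.1 - (q.2 : R) * ψ p.1) • single (p.1 + q.1, p.2 + q.2 - 1) 1

lemma jacobiator_blockBracket_single (hadd : ∀ α α' β, φ (α + α') β = φ α β + φ α' β)
    (hskew : ∀ α β, φ α β = -φ β α) (p q r : A × ℤ) :
    jacobiator (bilinOfBasis (blockBracket φ ψ)) (single p 1) (single q 1) (single r 1) = 0 := by
  obtain ⟨α, i⟩ := p
  obtain ⟨β, j⟩ := q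
  obtain ⟨γ, k⟩ := r
  simp only [jacobiator, blockBracket, bilinOfBasis_single, map_add, map_smul,
    LinearMap.add_apply, LinearMap.smul_apply, one_mul, one_smul]
  rw [show β + γ + α = α + β + γ by abel, show γ + α + β = α + β + γ by abel,
    show j + k + i = i + j + k by ring, show k + i + j = i + j + k by ring,
    show i + j - 1 + k = i + j + k - 1 by ring, show j + k - 1 + i = i + j + k - 1 by ring,
    show k + i - 1 + j = i + j + k - 1 by ring]
  simp only [hadd]
  rw [hskew β α, hskew γ α, hskew γ β]
  push_cast
  module

lemma mapDomain_blockBracketNat (p q : A × ℕ) :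
    mapDomain (Prod.map id Nat.cast) (blockBracketNat φ ψ p q) =
      blockBracket φ ψ (Prod.map id Nat.cast p) (Prod.map id Nat.cast q) := by
  obtain ⟨α, i⟩ := p
  obtain ⟨β, j⟩ := q
  simp only [blockBracketNat, blockBracket, mapDomain_add, mapDomain_smul, mapDomain_single,
    Prod.map_apply, id_eq]
  rcases Nat.eq_zero_or_pos (i + j) with hij | hij
  · obtain ⟨rfl, rfl⟩ := Nat.add_eq_zero_iff.mp hij
    simp
  · push_cast [Nat.cast_sub hij]
    rfl

lemma jacobiator_blockBracketNat (hadd : ∀ α α' β, φ (α + α') β = φ α β + φ α' β)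
    (hskew : ∀ α β, φ α β = -φ β α) (u v w : A × ℕ →₀ R) :
    jacobiator (bilinOfBasis (blockBracketNat φ ψ)) u v w = 0 :=
  jacobiator_eq_zero_of_injective (g := lmapDomain R R (Prod.map id Nat.cast))
    (mapDomain_injective (Function.injective_id.prodMap Nat.cast_injective))
    (mapDomain_bilinOfBasis _ (mapDomain_blockBracketNat φ ψ))
    (jacobiator_eq_zero_of_single _ (jacobiator_blockBracket_single φ ψ hadd hskew)) u v w

lemma blockBracketNat_swap (hskew : ∀ α β, φ α β = -φ β α) (p q : A × ℕ) :
    blockBracketNat φ ψ q p = -blockBracketNat φ ψ p q := by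
  simp only [blockBracketNat, hskew q.1, add_comm q.1, add_comm q.2]
  module

end BlockType

theorem stmt_18_general (Δ : AddSubgroup ℂ) (φ : Δ → Δ → ℂ)
    (hadd₁ : ∀ α α' β : Δ, φ (α + α') β = φ α β + φ α' β)
    (hskew : ∀ α β : Δ, φ α β = -φ β α)
    (ψ : Δ →+ ℂ) :
    ∃ br : ((Δ × ℕ) →₀ ℂ) →ₗ[ℂ] ((Δ × ℕ) →₀ ℂ) →ₗ[ℂ] ((Δ × ℕ) →₀ ℂ),
      (∀ (α β : Δ) (i j : ℕ), br (single (α, i) 1) (single (β, j) 1) =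
        φ α β • single (α + β, i + j) 1 +
        ((i : ℂ) * ψ β - (j : ℂ) * ψ α) • single (α + β, i + j - 1) 1) ∧
      (∀ u, br u u = 0) ∧
      (∀ u v w, br (br u v) w + br (br v w) u + br (br w u) v = 0) :=
  ⟨bilinOfBasis (blockBracketNat φ ψ),
    fun α β i j => by simp [blockBracketNat],
    bilinOfBasis_self (blockBracketNat_swap φ ψ hskew),
    jacobiator_blockBracketNat φ ψ hadd₁ hskew⟩

/-- For a skew-symmetric ℤ-bilinear form φ and an additive homomorphism ψ on Δ,
the bracket [x_{α,i}, x_{β,j}] = φ(α,β)x_{α+β,i+j} + (iψ(β) − jψ(α))x_{α+β,i+j−1}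
defines a Lie algebra structure. -/
theorem stmt_18 (Δ : AddSubgroup ℂ) (φ : Δ → Δ → ℂ)
    (hadd₁ : ∀ α α' β : Δ, φ (α + α') β = φ α β + φ α' β)
    (hadd₂ : ∀ α β β' : Δ, φ α (β + β') = φ α β + φ α β')
    (hskew : ∀ α β : Δ, φ α β = -φ β α)
    (ψ : Δ →+ ℂ) :
    ∃ br : ((Δ × ℕ) →₀ ℂ) →ₗ[ℂ] ((Δ × ℕ) →₀ ℂ) →ₗ[ℂ] ((Δ × ℕ) →₀ ℂ),
      (∀ (α β : Δ) (i j : ℕ), br (single (α, i) 1) (single (β, j) 1) =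
        φ α β • single (α + β, i + j) 1 +
        ((i : ℂ) * ψ β - (j : ℂ) * ψ α) • single (α + β, i + j - 1) 1) ∧
      (∀ u, br u u = 0) ∧
      (∀ u v w, br (br u v) w + br (br v w) u + br (br w u) v = 0) :=
  stmt_18_general Δ φ hadd₁ hskew ψ
end

section
/- Let Δ be an additive subgroup of ℂ and let A be the vector space with basis {x_α : α ∈ Δ}. Suppose ★ is a bilinear operation on A such that: (i) x_α★x_β − x_β★x_α = (β−α)x_{α+β} for all α,β ∈ Δ; (ii) [w★u, v] − [w★v, u] + [w,u]★v − [w,v]★u − w★[u,v] = 0 for all u,v,w ∈ A, where [u,v] := u★v − v★u; (iii) x₀★x₀ = 0; and (iv) for each α,β, x_α★x_β is a finite linear combination of basis elements (automatic). Then x_α★x_β = β x_{α+β} for all α,β ∈ Δ. -/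
/-!
Once the commutator is prescribed by (i), every commutator occurring in (ii) at basis vectors is
known, so (ii) becomes a *linear* identity in the structure constants of `★`. The Witt product
`x_α ★ x_β = β x_{α+β}` satisfies it, hence the defect `F = ★ - Witt` satisfies the homogeneous
identity; it is symmetric by (i) and `F(0,0,·) = 0` by (iii). Specialising the identity with an
index `0` shows `F(0,α,ν) = 0` for `ν ≠ 2α`, then `F(α,β,·) = 0` for `α ≠ β` and `F(γ,α,ν) = 0`
for `ν ≠ γ + α`; the remaining coefficients `F(0,α,2α)` and `F(α,α,2α)` are killed by instances
at the indices `α, 3α, 5α`.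
-/

open Finsupp

variable {Δ : AddSubgroup ℂ}

/-- The `ν`-coefficient of condition (ii) at `(u, v, w) = (x_α, x_β, x_γ)`, once every commutator
in it has been evaluated by (i); `c α β ν` stands for the `ν`-coefficient of `x_α ★ x_β`. -/
def compatExpr (c : Δ → Δ → Δ → ℂ) (γ α β ν : Δ) : ℂ :=
  (2 * (β : ℂ) - ν) * c γ α (ν - β) - (2 * (α : ℂ) - ν) * c γ β (ν - α)
    + ((α : ℂ) - γ) * c (γ + α) β ν - ((β : ℂ) - γ) * c (γ + β) α ν
    - ((β : ℂ) - α) * c γ (α + β) ν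

theorem compatExpr_sub (c d : Δ → Δ → Δ → ℂ) (γ α β ν : Δ) :
    compatExpr (c - d) γ α β ν = compatExpr c γ α β ν - compatExpr d γ α β ν := by
  simp only [compatExpr, Pi.sub_apply]
  ring

noncomputable def wittConst (α β ν : Δ) : ℂ := single (α + β) (β : ℂ) ν

theorem compatExpr_wittConst (γ α β ν : Δ) : compatExpr wittConst γ α β ν = 0 := by
  simp only [compatExpr, wittConst, single_apply, eq_sub_iff_add_eq, add_right_comm γ β α,
    ← add_assoc]
  split_ifs with h
  · subst h
    push_cast
    ring
  · ring

section Star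

variable (star : (Δ →₀ ℂ) →ₗ[ℂ] (Δ →₀ ℂ) →ₗ[ℂ] (Δ →₀ ℂ))

def HasWittCommutator : Prop :=
  ∀ α β : Δ, star (single α 1) (single β 1) - star (single β 1) (single α 1) =
    ((β : ℂ) - (α : ℂ)) • single (α + β) 1

def IsCommutatorCompatible : Prop :=
  ∀ u v w : Δ →₀ ℂ,
    (star (star w u) v - star v (star w u)) - (star (star w v) u - star u (star w v)) +
      star (star w u - star u w) v - star (star w v - star v w) u -
      star w (star u v - star v u) = 0

noncomputable def structConst (α β ν : Δ) : ℂ := star (single α 1) (single β 1) ν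

theorem star_sub_star_single_apply
    (hcomm : HasWittCommutator star)
    (p : Δ →₀ ℂ) (β ν : Δ) :
    star p (single β 1) ν - star (single β 1) p ν = (2 * (β : ℂ) - ν) * p (ν - β) := by
  induction p using Finsupp.induction_linear with
  | zero => simp
  | add p q hp hq =>
    simp only [map_add, LinearMap.add_apply, Finsupp.add_apply]
    linear_combination hp + hq
  | single μ c =>
    have hμ := DFunLike.congr_fun (hcomm μ β) ν
    rw [← mul_one c, ← smul_eq_mul, ← smul_single]
    simp only [map_smul, LinearMap.smul_apply, Finsupp.smul_apply, smul_eq_mul,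
      Finsupp.sub_apply, single_apply, eq_sub_iff_add_eq] at hμ ⊢
    split_ifs at hμ ⊢ with h
    · subst h
      push_cast
      linear_combination c * hμ
    · linear_combination c * hμ

theorem compatExpr_structConst
    (hcomm : HasWittCommutator star)
    (hcompat : IsCommutatorCompatible star)
    (γ α β ν : Δ) :
    compatExpr (structConst star) γ α β ν = 0 := by
  have h := DFunLike.congr_fun (hcompat (single α 1) (single β 1) (single γ 1)) ν
  rw [hcomm γ α, hcomm γ β, hcomm α β] at h
  simp only [map_smul, LinearMap.smul_apply, Finsupp.sub_apply, Finsupp.add_apply,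
    Finsupp.smul_apply, smul_eq_mul, Finsupp.coe_zero, Pi.zero_apply] at h
  have hβ := star_sub_star_single_apply star hcomm (star (single γ 1) (single α 1)) β ν
  have hα := star_sub_star_single_apply star hcomm (star (single γ 1) (single β 1)) α ν
  unfold compatExpr structConst
  linear_combination h - hβ + hα

end Star

structure IsNovikovDefect (F : Δ → Δ → Δ → ℂ) : Prop where
  compat : ∀ γ α β ν, compatExpr F γ α β ν = 0
  symm : ∀ α β ν, F α β ν = F β α ν
  zero_zero : ∀ ν, F 0 0 ν = 0

theorem isNovikovDefect_structConst_sub_wittConst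
    (star : (Δ →₀ ℂ) →ₗ[ℂ] (Δ →₀ ℂ) →ₗ[ℂ] (Δ →₀ ℂ))
    (hcomm : HasWittCommutator star)
    (hcompat : IsCommutatorCompatible star)
    (h00 : star (single 0 1) (single 0 1) = 0) :
    IsNovikovDefect (structConst star - wittConst) where
  compat γ α β ν := by
    rw [compatExpr_sub, compatExpr_structConst star hcomm hcompat, compatExpr_wittConst, sub_zero]
  symm α β ν := by
    have h := DFunLike.congr_fun (hcomm α β) ν
    simp only [Pi.sub_apply, structConst, wittConst, add_comm β α, Finsupp.sub_apply,
      Finsupp.smul_apply, smul_eq_mul, single_apply] at h ⊢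
    split_ifs at h ⊢ <;> linear_combination h
  zero_zero ν := by simp [structConst, wittConst, h00]

namespace IsNovikovDefect

variable {F : Δ → Δ → Δ → ℂ}

theorem apply_zero_left_of_ne (hF : IsNovikovDefect F) {α ν : Δ} (hν : (ν : ℂ) ≠ 2 * α) :
    F 0 α ν = 0 := by
  have h := hF.compat 0 α 0 ν
  simp only [compatExpr, zero_add, add_zero, sub_zero, ZeroMemClass.coe_zero, hF.zero_zero,
    hF.symm α 0] at h
  refine (mul_eq_zero.mp ?_).resolve_left (sub_ne_zero.mpr hν.symm)
  linear_combination h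

theorem apply_zero_left_of_eq (hF : IsNovikovDefect F) {α ν : Δ} (hν : (ν : ℂ) = 2 * α) :
    F 0 α ν = 0 := by
  rcases eq_or_ne (α : ℂ) 0 with hα | hα
  · obtain rfl : α = 0 := Subtype.ext hα
    obtain rfl : ν = 0 := by simpa using hν
    exact hF.zero_zero 0
  -- the instances `(γ, α, β, μ) = (0, α, 3α, 5α)` and `(α, 3α, 0, 5α)` of the identity
  set β := ν + α with hβ
  have hβc : (β : ℂ) = 3 * α := by rw [hβ, AddSubgroup.coe_add, hν]; ring
  have h1 := hF.compat 0 α β (ν + β)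
  have h2 := hF.compat α β 0 (ν + β)
  simp only [compatExpr, zero_add, add_zero, sub_zero, ZeroMemClass.coe_zero,
    add_sub_cancel_right, hF.symm β α, hF.symm α 0, hF.symm (α + β) 0] at h1 h2
  rw [hF.apply_zero_left_of_ne (α := β), hF.apply_zero_left_of_ne (α := α + β)] at h1
  rw [hF.apply_zero_left_of_ne (α := α + β)] at h2
  all_goals push_cast [hβc, hν] at *
  · have h : (α : ℂ) * (3 * F 0 α ν) = 0 := by linear_combination h1 - 2 * h2
    simpa [hα] using h
  all_goals grind

theorem apply_zero_left (hF : IsNovikovDefect F) (α ν : Δ) : F 0 α ν = 0 :=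
  (eq_or_ne (ν : ℂ) (2 * α)).elim hF.apply_zero_left_of_eq hF.apply_zero_left_of_ne

theorem apply_of_ne (hF : IsNovikovDefect F) {α β : Δ} (hαβ : (α : ℂ) ≠ β) (ν : Δ) :
    F α β ν = 0 := by
  have h := hF.compat 0 α β ν
  simp only [compatExpr, zero_add, ZeroMemClass.coe_zero, hF.apply_zero_left, hF.symm β α] at h
  refine (mul_eq_zero.mp ?_).resolve_left (sub_ne_zero.mpr hαβ)
  linear_combination h

theorem apply_of_ne_add (hF : IsNovikovDefect F) {γ α ν : Δ} (hν : (ν : ℂ) ≠ γ + α) :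
    F γ α ν = 0 := by
  have h := hF.compat γ α 0 ν
  simp only [compatExpr, add_zero, sub_zero, ZeroMemClass.coe_zero, hF.symm _ 0,
    hF.apply_zero_left] at h
  refine (mul_eq_zero.mp ?_).resolve_left (sub_ne_zero.mpr hν.symm)
  linear_combination h

theorem apply_self_of_eq (hF : IsNovikovDefect F) {α ν : Δ} (hν : (ν : ℂ) = 2 * α) :
    F α α ν = 0 := by
  rcases eq_or_ne (α : ℂ) 0 with hα | hα
  · obtain rfl : α = 0 := Subtype.ext hα
    exact hF.zero_zero ν
  -- the instance `(γ, α, β, μ) = (α, α, 3α, 5α)` of the identity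
  set β := ν + α with hβ
  have hβc : (β : ℂ) = 3 * α := by rw [hβ, AddSubgroup.coe_add, hν]; ring
  have h := hF.compat α α β (ν + β)
  simp only [compatExpr, add_sub_cancel_right, sub_self, zero_mul, add_zero] at h
  rw [hF.apply_of_ne (α := α) (β := β), hF.apply_of_ne (α := α + β) (β := α),
    hF.apply_of_ne (α := α) (β := α + β)] at h
  all_goals push_cast [hβc, hν] at *
  · have h : (α : ℂ) * F α α ν = 0 := by linear_combination h
    simpa [hα] using h
  all_goals grind

theorem eq_zero (hF : IsNovikovDefect F) (α β ν : Δ) : F α β ν = 0 := by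
  rcases eq_or_ne (α : ℂ) β with hαβ | hαβ
  · obtain rfl : α = β := Subtype.ext hαβ
    rcases eq_or_ne (ν : ℂ) (α + α) with hν | hν
    · exact hF.apply_self_of_eq (by rw [hν, two_mul])
    · exact hF.apply_of_ne_add hν
  · exact hF.apply_of_ne hαβ ν

end IsNovikovDefect

/-- Uniqueness: any bilinear operation ★ on the free space on Δ whose commutator
is the Witt-type bracket, satisfying the Gel'fand–Dorfman compatibility with
its own commutator and x₀★x₀ = 0, is x_α★x_β = β x_{α+β}. -/
theorem stmt_19 (Δ : AddSubgroup ℂ)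
    (star : (Δ →₀ ℂ) →ₗ[ℂ] (Δ →₀ ℂ) →ₗ[ℂ] (Δ →₀ ℂ))
    (hcomm : ∀ α β : Δ,
      star (single α 1) (single β 1) - star (single β 1) (single α 1) =
        ((β : ℂ) - (α : ℂ)) • single (α + β) 1)
    (hcompat : ∀ u v w : Δ →₀ ℂ,
      (star (star w u) v - star v (star w u)) -
      (star (star w v) u - star u (star w v)) +
      star (star w u - star u w) v - star (star w v - star v w) u -
      star w (star u v - star v u) = 0)
    (h00 : star (single 0 1) (single 0 1) = 0) :
    ∀ α β : Δ, star (single α 1) (single β 1) = (β : ℂ) • single (α + β) 1 := by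
  intro α β
  ext ν
  have h := (isNovikovDefect_structConst_sub_wittConst star hcomm hcompat h00).eq_zero α β ν
  rw [smul_single_one]
  rwa [Pi.sub_apply, Pi.sub_apply, Pi.sub_apply, sub_eq_zero] at h
end
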